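/- arXiv:0812.2870 — 6 statements merged into one kernel-verified Lean document; each statement's English description precedes it below -/
import Mathlib

section
/- In the pizza game on a pizza with an even number of pieces, the first player (Alice) has a strategy guaranteeing her eaten pieces have total size at least half the total size of the pizza. -/
/-!
Pizza game model.  Pieces are indexed by `ZMod n`.  A play is determined by
Alice's starting piece `p` and a sequence of direction choices
`d : ℕ → Bool`: the choice `d t` determines the piece eaten at move `t+1`
(`true` = clockwise end of the eaten interval, `false` = counterclockwise).
Moves are numbered `0, …, n-1`; Alice moves at even indices, Bob at odd ones,
so the choice `d t` is made by Bob when `t` is even and by Alice when `t` is odd.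
A strategy is a function from the list of previous direction choices to a choice.
-/

/-- The history of direction choices after `t` choices, when Alice plays `σ`
and Bob plays `τ`. -/
def hist (σ τ : List Bool → Bool) : ℕ → List Bool
  | 0 => []
  | t + 1 => hist σ τ t ++ [if Even t then τ (hist σ τ t) else σ (hist σ τ t)]

/-- The direction chosen at step `t` (determining the piece eaten at move `t+1`,
which belongs to Alice iff `t` is odd): Bob chooses it if `t` is even,
Alice if `t` is odd. -/
def choice (σ τ : List Bool → Bool) (t : ℕ) : Bool :=
  if Even t then τ (hist σ τ t) else σ (hist σ τ t)

/-- The piece eaten at move `t`, given starting piece `p` and direction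
choices `d`. -/
def piece (n : ℕ) (p : ZMod n) (d : ℕ → Bool) : ℕ → ZMod n
  | 0 => p
  | t + 1 =>
      if d t then
        p + ((((Finset.range (t + 1)).filter fun i => d i = true).card : ℕ) : ZMod n)
      else
        p - ((((Finset.range (t + 1)).filter fun i => d i = false).card : ℕ) : ZMod n)

/-- Alice's outcome: total size of the pieces eaten at even-numbered moves. -/
noncomputable def aliceOutcome (n : ℕ) [NeZero n] (s : ZMod n → ℝ) (p : ZMod n)
    (σ τ : List Bool → Bool) : ℝ :=
  ∑ t ∈ Finset.range n, if Even t then s (piece n p (choice σ τ) t) else 0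

/-- Bob's outcome: total size of the pieces eaten at odd-numbered moves. -/
noncomputable def bobOutcome (n : ℕ) [NeZero n] (s : ZMod n → ℝ) (p : ZMod n)
    (σ τ : List Bool → Bool) : ℝ :=
  ∑ t ∈ Finset.range n, if Even t then 0 else s (piece n p (choice σ τ) t)

/-- The follow-Bob strategy: Alice always repeats Bob's previous direction
choice, i.e. she picks the piece just revealed by Bob. -/
def followBob : List Bool → Bool := fun L => L.getLastD true

/-!
Colour the pieces by the parity of their index, which is well defined around the cycle because
`n` is even. Alice starts on a piece of the heavier colour and then always takes the piece next
to the one Bob has just taken, on the same side. The eaten interval then extends by an even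
number of pieces on each side after every pair of moves, so Bob always eats pieces of the other
colour and Alice eats exactly the colour class of her first piece.
-/

open Finset

namespace Pizza

variable (d : ℕ → Bool)

def cwCount (t : ℕ) : ℕ := #{i ∈ range t | d i = true}

def ccwCount (t : ℕ) : ℕ := #{i ∈ range t | d i = false}

/-- The integer `m` such that the piece eaten at move `t` is `p + m`. -/
def offset : ℕ → ℤ
  | 0 => 0
  | t + 1 => if d t then cwCount d (t + 1) else -ccwCount d (t + 1)

lemma cwCount_succ (t : ℕ) : cwCount d (t + 1) = cwCount d t + if d t then 1 else 0 := by
  unfold cwCount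
  rw [range_add_one, filter_insert]
  split <;> simp [card_insert_of_notMem]

lemma ccwCount_succ (t : ℕ) : ccwCount d (t + 1) = ccwCount d t + if d t then 0 else 1 := by
  unfold ccwCount
  rw [range_add_one, filter_insert]
  cases d t <;> simp [card_insert_of_notMem]

lemma cwCount_add_ccwCount (t : ℕ) : cwCount d t + ccwCount d t = t := by
  induction t with
  | zero => simp [cwCount, ccwCount]
  | succ t ih => rw [cwCount_succ, ccwCount_succ]; cases d t <;> simp <;> omega

lemma cwCount_mono : Monotone (cwCount d) := fun _ _ h =>
  card_le_card (filter_subset_filter _ (range_subset_range.2 h))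

lemma ccwCount_mono : Monotone (ccwCount d) := fun _ _ h =>
  card_le_card (filter_subset_filter _ (range_subset_range.2 h))

lemma neg_ccwCount_le_offset_le_cwCount (t : ℕ) :
    -(ccwCount d t : ℤ) ≤ offset d t ∧ offset d t ≤ cwCount d t := by
  cases t with
  | zero => simp [offset]
  | succ t => simp only [offset]; split <;> omega

/-- Each move eats a new extreme of the interval `[-ccwCount, cwCount]`. -/
lemma offset_ne_of_lt {t t' : ℕ} (h : t < t') : offset d t ≠ offset d t' := by
  obtain ⟨u, rfl⟩ : ∃ u, t' = u + 1 := ⟨t' - 1, by omega⟩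
  have hbounds := neg_ccwCount_le_offset_le_cwCount d t
  have hcw := cwCount_mono d (show t ≤ u by omega)
  have hccw := ccwCount_mono d (show t ≤ u by omega)
  rw [offset.eq_2, cwCount_succ, ccwCount_succ]
  cases d u <;> simp <;> omega

lemma abs_offset_sub_le {t t' : ℕ} (h : t ≤ t') : |offset d t - offset d t'| ≤ t' := by
  have := neg_ccwCount_le_offset_le_cwCount d t
  have := neg_ccwCount_le_offset_le_cwCount d t'
  have := cwCount_mono d h
  have := ccwCount_mono d h
  have := cwCount_add_ccwCount d t'
  rw [abs_le]
  omega

variable {n : ℕ} (p : ZMod n)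

lemma piece_eq_add_offset (t : ℕ) : piece n p d t = p + (offset d t : ZMod n) := by
  cases t with
  | zero => simp [piece, offset]
  | succ t =>
    simp only [piece, offset, cwCount, ccwCount]
    split <;> push_cast <;> ring

lemma piece_injOn : Set.InjOn (piece n p d) (range n) := by
  suffices ∀ {t t'}, t < t' → t' < n → piece n p d t ≠ piece n p d t' by
    intro t ht t' ht' heq
    rw [coe_range, Set.mem_Iio] at ht ht'
    rcases lt_trichotomy t t' with h | h | h
    exacts [absurd heq (this h ht'), h, absurd heq.symm (this h ht)]
  intro t t' h ht' heq
  rw [piece_eq_add_offset, piece_eq_add_offset, add_right_inj, ← sub_eq_zero, ← Int.cast_sub,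
    ZMod.intCast_zmod_eq_zero_iff_dvd] at heq
  have hn : (n : ℤ) ≤ |offset d t - offset d t'| :=
    Int.le_of_dvd (abs_pos.2 (sub_ne_zero.2 (offset_ne_of_lt d h))) ((dvd_abs _ _).2 heq)
  have := abs_offset_sub_le d h.le
  omega

lemma image_piece_range [NeZero n] : (range n).image (piece n p d) = univ :=
  eq_univ_of_card _ <| by rw [card_image_of_injOn (piece_injOn d p), card_range, ZMod.card]

section Paired

variable {d} (hd : ∀ k, d (2 * k + 1) = d (2 * k))
include hd

lemma cwCount_two_mul_emod_two (k : ℕ) :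
    cwCount d (2 * k) % 2 = 0 ∧ ccwCount d (2 * k) % 2 = 0 := by
  induction k with
  | zero => simp [cwCount, ccwCount]
  | succ k ih =>
    rw [show 2 * (k + 1) = 2 * k + 1 + 1 by ring, cwCount_succ, ccwCount_succ, cwCount_succ,
      ccwCount_succ, hd k]
    cases d (2 * k) <;> simp <;> omega

lemma offset_emod_two (t : ℕ) : offset d t % 2 = t % 2 := by
  cases t with
  | zero => rfl
  | succ t =>
    obtain ⟨k, rfl | rfl⟩ := Nat.even_or_odd' t
    · have := cwCount_two_mul_emod_two hd k
      simp only [offset, cwCount_succ, ccwCount_succ]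
      cases d (2 * k) <;> simp <;> omega
    · have := cwCount_two_mul_emod_two hd (k + 1)
      rw [show 2 * (k + 1) = 2 * k + 1 + 1 by ring] at this
      simp only [offset]
      split <;> omega

lemma castHom_piece (h : 2 ∣ n) (t : ℕ) :
    ZMod.castHom h (ZMod 2) (piece n p d t) = ZMod.castHom h (ZMod 2) p + t := by
  rw [piece_eq_add_offset, map_add, map_intCast, ← Int.cast_natCast (R := ZMod 2) t,
    (ZMod.intCast_eq_intCast_iff' _ t 2).2 (offset_emod_two hd t)]

end Paired

lemma choice_followBob_odd (τ : List Bool → Bool) (k : ℕ) :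
    choice followBob τ (2 * k + 1) = choice followBob τ (2 * k) := by
  have he : Even (2 * k) := even_two_mul k
  have ho : ¬ Even (2 * k + 1) := by simp
  simp only [choice, hist, if_pos he, if_neg ho, followBob, List.getLastD_concat]

lemma aliceOutcome_followBob {n : ℕ} [NeZero n] (h : 2 ∣ n) (s : ZMod n → ℝ) (p : ZMod n)
    (τ : List Bool → Bool) :
    aliceOutcome n s p followBob τ =
      ∑ i, if ZMod.castHom h (ZMod 2) i = ZMod.castHom h (ZMod 2) p then s i else 0 := by
  rw [← image_piece_range (choice followBob τ) p, sum_image (piece_injOn _ p), aliceOutcome]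
  refine sum_congr rfl fun t _ => ?_
  simp only [castHom_piece p (choice_followBob_odd τ) h, add_eq_left, ZMod.natCast_eq_zero_iff,
    ← even_iff_two_dvd]

lemma exists_half_le_sum_fiber {α : Type*} [Fintype α] (f : α → ZMod 2) (s : α → ℝ) :
    ∃ q, (∑ i, s i) / 2 ≤ ∑ i, if f i = q then s i else 0 := by
  have hsplit :
      ((∑ i, if f i = 0 then s i else 0) + ∑ i, if f i = 1 then s i else 0) = ∑ i, s i := by
    rw [← sum_add_distrib]
    refine sum_congr rfl fun i _ => ?_
    rcases (by decide : ∀ y : ZMod 2, y = 0 ∨ y = 1) (f i) with h | h <;> simp [h]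
  by_contra! hlt
  linarith [hlt 0, hlt 1]

end Pizza

open Pizza in
theorem stmt1_general (n : ℕ) [NeZero n] (hn : Even n) (s : ZMod n → ℝ) :
    ∃ (p : ZMod n) (σ : List Bool → Bool), ∀ τ : List Bool → Bool,
      (∑ i, s i) / 2 ≤ aliceOutcome n s p σ τ := by
  have h2 : 2 ∣ n := hn.two_dvd
  obtain ⟨q, hq⟩ := exists_half_le_sum_fiber (ZMod.castHom h2 (ZMod 2)) s
  refine ⟨(q.val : ZMod n), followBob, fun τ => ?_⟩
  rwa [aliceOutcome_followBob h2, map_natCast, ZMod.natCast_zmod_val]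

/-- In the pizza game on a pizza with an even number of pieces, Alice has a
strategy guaranteeing her at least half of the total size. -/
theorem stmt1 (n : ℕ) [NeZero n] (hn : Even n) (s : ZMod n → ℝ)
    (hs : ∀ i, 0 ≤ s i) :
    ∃ (p : ZMod n) (σ : List Bool → Bool), ∀ τ : List Bool → Bool,
      (∑ i, s i) / 2 ≤ aliceOutcome n s p σ τ :=
  stmt1_general n hn s
end

section
/- In the pizza game on a pizza with an odd number of pieces, Alice has a strategy guaranteeing her at least one third of the total size of the pizza. -/
/-!
Alice eats any piece `p = 2x` and afterwards always takes the piece Bob has just uncovered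
(`followBob`). In every round Bob and Alice eat two adjacent pieces on the same side, so with
`n = 2M + 1` Alice ends up with the pieces `p + 2j`, `-C ≤ j ≤ M - C`, where `C` is the number of
rounds in which Bob went counterclockwise. Since 2 is invertible mod `n`, relabelling piece `2y`
as `y` turns Alice's share into the weight of an arc of `M + 1` consecutive positions containing
`x`, and Bob decides which one. So it suffices to choose `x` such that all these arcs weigh at
least a third of the pizza. If no such `x` exists, every position lies in a light arc; from a light
arc at `b`, take the last light arc starting in `b, …, b + M + 1` and the light arc through the
position just after it: the three light arcs cover the circle, which is absurd.
-/

open Finset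

section Arcs

variable {α : Type*} [AddCommMonoid α]

def arcSum {n : ℕ} (f : ZMod n → α) (m : ℕ) (x : ZMod n) : α :=
  ∑ j ∈ range m, f (x + j)

theorem sum_range_add_natCast {n : ℕ} [NeZero n] (f : ZMod n → α) (x : ZMod n) :
    ∑ t ∈ range n, f (x + t) = ∑ r, f r := by
  refine sum_nbij' (fun t => x + t) (fun r => (r - x).val) (by simp)
    (fun r _ => by simp [ZMod.val_lt]) (fun t ht => ?_) (fun r _ => by simp) (fun _ _ => rfl)
  simp [ZMod.val_natCast_of_lt (mem_range.1 ht)]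

variable [PartialOrder α] [IsOrderedAddMonoid α]

theorem sum_le_arcSum_add_arcSum_add_arcSum {n : ℕ} [NeZero n] {f : ZMod n → α} (hf : 0 ≤ f)
    {m i j : ℕ} (hi : i ≤ m) (hj : j ≤ m) (hn : n ≤ i + j + m) (x : ZMod n) :
    ∑ r, f r ≤ arcSum f m x + arcSum f m (x + i) + arcSum f m (x + i + j) := by
  set g : ℕ → α := fun t => f (x + t)
  have arc_le {k : ℕ} (hk : k ≤ m) (y : ℕ) :
      ∑ t ∈ range k, g (y + t) ≤ arcSum f m (x + y) := by
    refine (sum_le_sum_of_subset_of_nonneg (f := fun t => g (y + t)) (range_mono hk)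
      fun _ _ _ => hf _).trans_eq ?_
    simp only [g, arcSum, Nat.cast_add, add_assoc]
  calc ∑ r, f r = ∑ t ∈ range n, g t := (sum_range_add_natCast f x).symm
    _ ≤ ∑ t ∈ range (i + j + m), g t :=
      sum_le_sum_of_subset_of_nonneg (range_mono hn) fun _ _ _ => hf _
    _ = ∑ t ∈ range i, g (0 + t) + ∑ t ∈ range j, g (i + t) + ∑ t ∈ range m, g (i + j + t) := by
      simp only [sum_range_add, zero_add, add_assoc]
    _ ≤ arcSum f m x + arcSum f m (x + i) + arcSum f m (x + i + j) := by
      gcongr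
      · simpa using arc_le hi 0
      · exact arc_le hj i
      · simpa [add_assoc] using arc_le le_rfl (i + j)

end Arcs

theorem exists_forall_third_le_arcSum {M : ℕ} {f : ZMod (2 * M + 1) → ℝ} (hf : 0 ≤ f) :
    ∃ x, ∀ k ≤ M, (∑ r, f r) / 3 ≤ arcSum f (M + 1) (x - k) := by
  classical
  by_contra! hbad
  set T := ∑ r, f r
  obtain ⟨k₀, -, hb⟩ := hbad 0
  set b : ZMod (2 * M + 1) := 0 - k₀
  set i := Nat.findGreatest (fun i => arcSum f (M + 1) (b + i) < T / 3) (M + 1)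
  have hi : i ≤ M + 1 := Nat.findGreatest_le _
  have hbi : arcSum f (M + 1) (b + i) < T / 3 :=
    Nat.findGreatest_spec (P := fun i => arcSum f (M + 1) (b + i) < T / 3) (Nat.zero_le _)
      (by simpa using hb)
  obtain ⟨k, hk, hbk⟩ := hbad (b + i + (M + 1 : ℕ))
  set j := M + 1 - k
  have hbij : arcSum f (M + 1) (b + i + j) < T / 3 := by
    rwa [Nat.cast_sub (by omega), ← add_sub_assoc]
  have hij : M + 1 < i + j := by
    by_contra! h
    have := Nat.le_findGreatest (P := fun i => arcSum f (M + 1) (b + i) < T / 3) h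
      (by simpa [add_assoc] using hbij)
    omega
  -- the light arcs at `b`, `b + i` and `b + i + j` cover the circle
  have := sum_le_arcSum_add_arcSum_add_arcSum hf hi (j := j) (by omega) (by omega) b
  linarith

theorem sum_two_mul_of_odd {α : Type*} [AddCommMonoid α] {n : ℕ} [NeZero n] (hn : Odd n)
    (s : ZMod n → α) : ∑ i, s (2 * i) = ∑ i, s i := by
  simpa using Equiv.sum_comp (Units.mulLeft (ZMod.unitOfCoprime 2 (Nat.coprime_two_left.2 hn))) s

section Game

variable {n : ℕ} (d : ℕ → Bool)

theorem piece_succ (p : ZMod n) (t : ℕ) :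
    piece n p d (t + 1) = if d t then p + (t + 1 : ℕ) - #{i ∈ range (t + 1) | d i = false}
      else p - #{i ∈ range (t + 1) | d i = false} := by
  have hcard :
      #{i ∈ range (t + 1) | d i = true} + #{i ∈ range (t + 1) | d i = false} = t + 1 := by
    simpa using card_filter_add_card_filter_not (s := range (t + 1)) (fun i => d i = true)
  rw [piece]
  split_ifs
  · have hcast := congr_arg (Nat.cast : ℕ → ZMod n) hcard
    push_cast at hcast ⊢
    linear_combination hcast
  · rfl

-- `d (2 * i)` is Bob's direction in round `i`.
def ccwRounds (k : ℕ) : ℕ := #{i ∈ range k | d (2 * i) = false}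

theorem ccwRounds_le (k : ℕ) : ccwRounds d k ≤ k :=
  (card_filter_le _ _).trans_eq (card_range k)

theorem ccwRounds_succ (k : ℕ) :
    ccwRounds d (k + 1) = ccwRounds d k + if d (2 * k) then 0 else 1 := by
  simp only [ccwRounds, card_filter, sum_range_succ]
  cases d (2 * k) <;> rfl

variable {d}

theorem card_filter_false_range_two_mul (hd : ∀ i, d (2 * i + 1) = d (2 * i)) (k : ℕ) :
    #{i ∈ range (2 * k) | d i = false} = 2 * ccwRounds d k := by
  induction k with
  | zero => rfl
  | succ k ih =>
    rw [ccwRounds_succ, show 2 * (k + 1) = 2 * k + 1 + 1 by ring, card_filter, sum_range_succ,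
      sum_range_succ, ← card_filter, ih, hd]
    cases d (2 * k) <;>
      simp only [Bool.false_eq_true, Bool.true_eq_false, if_true, if_false] <;> ring

theorem piece_two_mul_add_two (hd : ∀ i, d (2 * i + 1) = d (2 * i)) (p : ZMod n) (k : ℕ) :
    piece n p d (2 * k + 2) = if d (2 * k) then p + 2 * (k + 1 : ℕ) - 2 * ccwRounds d (k + 1)
      else p - 2 * ccwRounds d (k + 1) := by
  rw [piece_succ, hd, show 2 * k + 1 + 1 = 2 * (k + 1) by ring,
    card_filter_false_range_two_mul hd]
  push_cast
  rfl

theorem sum_even_piece (hd : ∀ i, d (2 * i + 1) = d (2 * i)) {α : Type*} [AddCommMonoid α]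
    (s : ZMod n → α) (p : ZMod n) (k : ℕ) :
    ∑ t ∈ range (2 * k + 1), (if Even t then s (piece n p d t) else 0)
      = ∑ j ∈ range (k + 1), s (p - 2 * ccwRounds d k + 2 * j) := by
  induction k with
  | zero => simp [piece, ccwRounds]
  | succ k ih =>
    rw [show 2 * (k + 1) + 1 = 2 * k + 1 + 1 + 1 by ring, sum_range_succ, sum_range_succ, ih,
      if_neg (by simp [parity_simps]), if_pos (by simp [parity_simps]), add_zero,
      show 2 * k + 1 + 1 = 2 * k + 2 by ring, piece_two_mul_add_two hd, ccwRounds_succ]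
    cases d (2 * k) <;> simp only [Bool.false_eq_true, if_true, if_false, add_zero]
    · rw [sum_range_succ' _ (k + 1)]
      congr 1
      · exact sum_congr rfl fun j _ => congr_arg s (by push_cast; ring)
      · congr 1; push_cast; ring
    · rw [sum_range_succ _ (k + 1)]
      congr 2
      push_cast; ring

end Game

theorem choice_followBob_two_mul_add_one (τ : List Bool → Bool) (k : ℕ) :
    choice followBob τ (2 * k + 1) = choice followBob τ (2 * k) := by
  rw [choice, if_neg (by simp [parity_simps])]
  simp [followBob, hist, choice]

theorem aliceOutcome_followBob {M : ℕ} (s : ZMod (2 * M + 1) → ℝ) (x : ZMod (2 * M + 1))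
    (τ : List Bool → Bool) :
    aliceOutcome (2 * M + 1) s (2 * x) followBob τ
      = arcSum (fun y : ZMod (2 * M + 1) => s (2 * y)) (M + 1)
          (x - ↑(ccwRounds (choice followBob τ) M)) := by
  rw [aliceOutcome, sum_even_piece (choice_followBob_two_mul_add_one τ), arcSum]
  refine sum_congr rfl fun j _ => congr_arg s ?_
  ring

/-- In the pizza game on a pizza with an odd number of pieces, Alice has a
strategy guaranteeing her at least one third of the total size. -/
theorem stmt2 (n : ℕ) [NeZero n] (hn : Odd n) (s : ZMod n → ℝ)
    (hs : ∀ i, 0 ≤ s i) :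
    ∃ (p : ZMod n) (σ : List Bool → Bool), ∀ τ : List Bool → Bool,
      (∑ i, s i) / 3 ≤ aliceOutcome n s p σ τ := by
  obtain ⟨M, rfl⟩ := hn
  obtain ⟨x, hx⟩ := exists_forall_third_le_arcSum (f := fun y => s (2 * y)) fun _ => hs _
  refine ⟨2 * x, followBob, fun τ => ?_⟩
  rw [aliceOutcome_followBob, ← sum_two_mul_of_odd ⟨M, rfl⟩ s]
  exact hx _ (ccwRounds_le _ _)
end

section
/- Let n be odd and let C, C' be two distinct cuts of an n-piece pizza. Then C and C' divide the cyclic sequence of pieces into one interval with an odd number of pieces and one with an even number of pieces; moreover the almost alternating colorings induced by C and C' agree (R(C) = R(C')) on the odd interval and are opposite (R(C) = G(C')) on the even interval. -/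
/-! Reading both colorings relative to the cut `C`, piece `i ∈ [C, C')` lies at distance
`(i - C).val` from `C` and at distance `(i - C).val + (C - C').val` from `C'`, with no wrap-around
modulo `n`. So the two colorings agree on `[C, C')` exactly when the length `(C - C').val` of the
complementary interval is even. The two lengths add up to the odd number `n`, so exactly one of
them is even. -/

/-- Piece `i` is red in the almost alternating coloring induced by the cut `C`
(the two pieces adjacent to `C` are red and the colors alternate elsewhere). -/
def red (n : ℕ) (C i : ZMod n) : Prop := Even ((i - C).val)

/-- The cyclic interval of pieces from `C` (included) up to `C'` (excluded). -/
def cyclicInterval (n : ℕ) (C C' : ZMod n) : Finset (ZMod n) :=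
  (Finset.range ((C' - C).val)).image fun k : ℕ => C + (k : ZMod n)

lemma ZMod.val_sub_add_val_sub {n : ℕ} [NeZero n] {a b : ZMod n} (h : a ≠ b) :
    (a - b).val + (b - a).val = n := by
  rw [← neg_sub a b, ZMod.neg_val, if_neg (sub_ne_zero.mpr h)]
  have := ZMod.val_lt (a - b)
  omega

section CyclicInterval

variable {n : ℕ} [NeZero n] {C C' i : ZMod n}

lemma val_sub_of_mem_cyclicInterval (hi : i ∈ cyclicInterval n C C') :
    (i - C').val = (i - C).val + (C - C').val := by
  obtain ⟨k, hk, rfl⟩ := Finset.mem_image.mp hi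
  rw [Finset.mem_range] at hk
  have hsum := ZMod.val_sub_add_val_sub (fun h : C' = C => by simp [h] at hk)
  have hk' : (k : ZMod n).val = k := ZMod.val_cast_of_lt (by omega)
  rw [add_sub_cancel_left, add_sub_right_comm, ZMod.val_add_of_lt (by omega), hk', add_comm]

lemma red_iff_red_iff_even_of_mem_cyclicInterval (hi : i ∈ cyclicInterval n C C') :
    (red n C i ↔ red n C' i) ↔ Even (C - C').val := by
  rw [red, red, val_sub_of_mem_cyclicInterval hi, Nat.even_add]
  tauto

lemma red_iff_red_of_mem_cyclicInterval (hi : i ∈ cyclicInterval n C C')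
    (h : Even (C - C').val) : red n C i ↔ red n C' i :=
  (red_iff_red_iff_even_of_mem_cyclicInterval hi).mpr h

lemma red_iff_not_red_of_mem_cyclicInterval (hi : i ∈ cyclicInterval n C C')
    (h : Odd (C - C').val) : red n C i ↔ ¬ red n C' i := by
  have := mt (red_iff_red_iff_even_of_mem_cyclicInterval hi).mp (Nat.not_even_iff_odd.mpr h)
  tauto

end CyclicInterval

/-- Two distinct cuts of an odd pizza divide it into one odd interval and one
even interval; the induced almost alternating colorings agree on the odd
interval and are opposite on the even interval. -/
theorem stmt6 (n : ℕ) (hn : Odd n) (C C' : ZMod n) (hne : C ≠ C') :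
    (C' - C).val + (C - C').val = n ∧
    (Odd ((C' - C).val) ↔ Even ((C - C').val)) ∧
    (Odd ((C' - C).val) →
      (∀ i ∈ cyclicInterval n C C', (red n C i ↔ red n C' i)) ∧
      (∀ i ∈ cyclicInterval n C' C, (red n C i ↔ ¬ red n C' i))) ∧
    (Odd ((C - C').val) →
      (∀ i ∈ cyclicInterval n C' C, (red n C i ↔ red n C' i)) ∧
      (∀ i ∈ cyclicInterval n C C', (red n C i ↔ ¬ red n C' i))) := by
  have : NeZero n := ⟨fun h => by simp [h] at hn⟩
  have hsum := ZMod.val_sub_add_val_sub hne.symm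
  have hodd : Odd ((C' - C).val + (C - C').val) := hsum.symm ▸ hn
  refine ⟨hsum, Nat.odd_add.mp hodd, fun h => ⟨fun i hi => ?_, fun i hi => ?_⟩,
    fun h => ⟨fun i hi => ?_, fun i hi => ?_⟩⟩
  · exact red_iff_red_of_mem_cyclicInterval hi (Nat.odd_add.mp hodd |>.mp h)
  · exact iff_not_comm.mp (red_iff_not_red_of_mem_cyclicInterval hi h)
  · exact (red_iff_red_of_mem_cyclicInterval hi (Nat.odd_add'.mp hodd |>.mp h)).symm
  · exact red_iff_not_red_of_mem_cyclicInterval hi h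
end

section
/- Suppose in an odd pizza the cut C is a best answer to a piece p (i.e. C minimizes the total size of R(C') over all cuts C' with p ∈ R(C')). If I is a cyclic interval with an even number of pieces, one of whose ends is the cut C, and p ∉ I, then the total size of the G(C)-pieces in I is at least the total size of the R(C)-pieces in I. -/
/-- Total size of the red pieces `R(C)` of the almost alternating coloring
induced by the cut `C`: piece `i` is red iff `(i - C).val` is even. -/
noncomputable def redSize (n : ℕ) [NeZero n] (s : ZMod n → ℝ) (C : ZMod n) : ℝ :=
  ∑ i : ZMod n, if Even ((i - C).val) then s i else 0

/-
Moving the cut from `C` across an even interval `I` of length `m < n` to the cut at its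
other end recolors exactly the pieces of `I`: outside `I` the offset from the cut changes by
the even number `m`, while inside `I` it changes by `n - m`, which is odd because `n` is.
The new cut still has `p ∉ I` in its red class, so best-answer minimality of `C` compares the
two red sizes; the common part outside `I` cancels, leaving red `C`-size of `I` ≤ green.
-/

namespace Pizza

lemma image_range_sub_sub_eq_image_range_add {n : ℕ} (C : ZMod n) (m : ℕ) :
    (Finset.range m).image (fun j : ℕ => C - 1 - (j : ZMod n)) =
      (Finset.range m).image (fun j : ℕ => (C - m) + (j : ZMod n)) := by
  have hreflect : ∀ j < m, ((m - 1 - j : ℕ) : ZMod n) = (m : ZMod n) - 1 - j := fun j hj => by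
    push_cast [Nat.cast_sub (by omega : j ≤ m - 1), Nat.cast_sub (by omega : 1 ≤ m)]
    ring
  ext i
  simp only [Finset.mem_image, Finset.mem_range]
  constructor
  · rintro ⟨j, hj, rfl⟩
    exact ⟨m - 1 - j, by omega, by rw [hreflect j hj]; ring⟩
  · rintro ⟨j, hj, rfl⟩
    exact ⟨m - 1 - j, by omega, by rw [hreflect j hj]; ring⟩

variable {n : ℕ} [NeZero n]

lemma mem_image_range_add_of_val_sub_lt {B i : ZMod n} {m : ℕ} (h : (i - B).val < m) :
    i ∈ (Finset.range m).image (fun j : ℕ => B + (j : ZMod n)) :=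
  Finset.mem_image.mpr ⟨(i - B).val, Finset.mem_range.mpr h, by rw [ZMod.natCast_zmod_val]; ring⟩

lemma mem_image_range_add_iff {B i : ZMod n} {m : ℕ} (hmn : m ≤ n) :
    i ∈ (Finset.range m).image (fun j : ℕ => B + (j : ZMod n)) ↔ (i - B).val < m := by
  refine ⟨?_, mem_image_range_add_of_val_sub_lt⟩
  intro hi
  obtain ⟨j, hj, rfl⟩ := Finset.mem_image.mp hi
  rw [Finset.mem_range] at hj
  rwa [add_sub_cancel_left, ZMod.val_cast_of_lt (by omega)]

lemma even_val_sub_add_iff_iff_le (hn : Odd n) {m : ℕ} (hm : Even m) (hmn : m < n)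
    (B i : ZMod n) :
    (Even ((i - (B + m)).val) ↔ Even ((i - B).val)) ↔ m ≤ (i - B).val := by
  have hk : (i - B).val < n := ZMod.val_lt _
  have hcast : (((i - B).val : ℕ) : ZMod n) = i - B := ZMod.natCast_zmod_val _
  rcases le_or_gt m (i - B).val with h | h
  · have hshift : i - (B + m) = (((i - B).val - m : ℕ) : ZMod n) := by
      rw [Nat.cast_sub h, hcast]; ring
    rw [hshift, ZMod.val_cast_of_lt (by omega)]
    simp only [Nat.even_iff] at hm ⊢
    omega
  · -- going back past the cut wraps around, adding `n` to the offset
    have hshift : i - (B + m) = (((i - B).val + (n - m) : ℕ) : ZMod n) := by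
      push_cast [Nat.cast_sub hmn.le, hcast, ZMod.natCast_self]
      ring
    rw [hshift, ZMod.val_cast_of_lt (by omega)]
    simp only [Nat.odd_iff, Nat.even_iff] at hn hm ⊢
    omega

lemma recolor_iff_mem_image_range_add (hn : Odd n) {m : ℕ} (hm : Even m) (hmn : m < n)
    (B i : ZMod n) :
    (Even ((i - (B + m)).val) ↔ Even ((i - B).val)) ↔
      i ∉ (Finset.range m).image (fun j : ℕ => B + (j : ZMod n)) := by
  rw [even_val_sub_add_iff_iff_le hn hm hmn, mem_image_range_add_iff hmn.le, not_lt]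

lemma sum_red_le_sum_green_of_redSize_le (s : ZMod n → ℝ) {C C' : ZMod n}
    {I : Finset (ZMod n)} (hrecolor : ∀ i, (Even ((i - C').val) ↔ Even ((i - C).val)) ↔ i ∉ I)
    (hle : redSize n s C ≤ redSize n s C') :
    (∑ i ∈ I, if Even ((i - C).val) then s i else 0) ≤
      ∑ i ∈ I, if Even ((i - C).val) then 0 else s i := by
  have hC : redSize n s C = (∑ i ∈ I, if Even ((i - C).val) then s i else 0) +
      ∑ i ∈ Iᶜ, if Even ((i - C).val) then s i else 0 :=
    (Finset.sum_add_sum_compl I _).symm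
  have hC' : redSize n s C' = (∑ i ∈ I, if Even ((i - C).val) then 0 else s i) +
      ∑ i ∈ Iᶜ, if Even ((i - C).val) then s i else 0 := by
    rw [redSize, ← Finset.sum_add_sum_compl I]
    congr 1
    · refine Finset.sum_congr rfl fun i hi => ?_
      have hflip : Even ((i - C').val) ↔ ¬ Even ((i - C).val) := by
        have := (hrecolor i).not.mpr (not_not.mpr hi)
        tauto
      rw [if_congr hflip rfl rfl, ite_not]
    · exact Finset.sum_congr rfl fun i hi =>
        if_congr ((hrecolor i).mpr (Finset.mem_compl.mp hi)) rfl rfl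
  linarith

end Pizza

open Pizza in
theorem stmt8_general (n : ℕ) [NeZero n] (hn : Odd n) (s : ZMod n → ℝ)
    (p C : ZMod n) (hp : Even ((p - C).val))
    (hbest : ∀ C' : ZMod n, Even ((p - C').val) → redSize n s C ≤ redSize n s C')
    (m : ℕ) (hm : Even m) (I : Finset (ZMod n))
    (hI : I = (Finset.range m).image (fun j : ℕ => C + (j : ZMod n)) ∨
          I = (Finset.range m).image (fun j : ℕ => C - 1 - (j : ZMod n)))
    (hpI : p ∉ I) :
    (∑ i ∈ I, if Even ((i - C).val) then s i else 0) ≤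
      ∑ i ∈ I, if Even ((i - C).val) then 0 else s i := by
  obtain ⟨B, hBC, rfl⟩ : ∃ B : ZMod n, (C = B ∨ C = B + m) ∧
      I = (Finset.range m).image (fun j : ℕ => B + (j : ZMod n)) := by
    rcases hI with rfl | rfl
    · exact ⟨C, .inl rfl, rfl⟩
    · exact ⟨C - m, .inr (by ring), image_range_sub_sub_eq_image_range_add C m⟩
  have hmn : m < n := by
    by_contra! h
    exact hpI (mem_image_range_add_of_val_sub_lt ((ZMod.val_lt _).trans_le h))
  have hrecolor := recolor_iff_mem_image_range_add hn hm hmn B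
  rcases hBC with rfl | rfl
  · exact sum_red_le_sum_green_of_redSize_le s hrecolor
      (hbest _ (((hrecolor p).mpr hpI).mpr hp))
  · exact sum_red_le_sum_green_of_redSize_le s (fun i => iff_comm.trans (hrecolor i))
      (hbest _ (((hrecolor p).mpr hpI).mp hp))

/-- If the cut `C` is a best answer to the piece `p` (it minimizes `‖R(·)‖`
among cuts whose red class contains `p`), and `I` is an even cyclic interval
ending at `C` (on either side) with `p ∉ I`, then the green size of `I` is at
least its red size. -/
theorem stmt8 (n : ℕ) [NeZero n] (hn : Odd n) (s : ZMod n → ℝ) (hs : ∀ i, 0 ≤ s i)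
    (p C : ZMod n) (hp : Even ((p - C).val))
    (hbest : ∀ C' : ZMod n, Even ((p - C').val) → redSize n s C ≤ redSize n s C')
    (m : ℕ) (hm : Even m) (I : Finset (ZMod n))
    (hI : I = (Finset.range m).image (fun j : ℕ => C + (j : ZMod n)) ∨
          I = (Finset.range m).image (fun j : ℕ => C - 1 - (j : ZMod n)))
    (hpI : p ∉ I) :
    (∑ i ∈ I, if Even ((i - C).val) then s i else 0) ≤
      ∑ i ∈ I, if Even ((i - C).val) then 0 else s i :=
  stmt8_general n hn s p C hp hbest m hm I hI hpI
end

section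
/- In an odd pizza, a cut C minimizes ‖R(C)‖ over all cuts if and only if for every cyclic interval I with an even number of pieces ending at C, the total size of G(C)-pieces in I is at least the total size of R(C)-pieces in I. -/
open Finset

noncomputable def redSizeOn (n : ℕ) [NeZero n] (s : ZMod n → ℝ) (C : ZMod n)
    (I : Finset (ZMod n)) : ℝ :=
  ∑ i ∈ I, if Even ((i - C).val) then s i else 0

noncomputable def greenSizeOn (n : ℕ) [NeZero n] (s : ZMod n → ℝ) (C : ZMod n)
    (I : Finset (ZMod n)) : ℝ :=
  ∑ i ∈ I, if Even ((i - C).val) then 0 else s i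

section

variable {n : ℕ} [NeZero n]

lemma ZMod.even_val_neg_sub_one_iff (hn : Odd n) (x : ZMod n) :
    Even ((-x - 1).val) ↔ Even x.val := by
  have hx := x.val_lt
  have h : -x - 1 = ((n - 1 - x.val : ℕ) : ZMod n) := by
    rw [Nat.cast_sub (by omega), Nat.cast_sub (by omega), ZMod.natCast_self,
      ZMod.natCast_zmod_val, Nat.cast_one]
    ring
  rw [h, ZMod.val_natCast_of_lt (by omega)]
  have := Nat.odd_iff.mp hn
  simp only [Nat.even_iff]
  omega

lemma ZMod.even_val_sub_natCast_iff (hn : Odd n) (x : ZMod n) {m : ℕ} (hm : m < n)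
    (hme : Even m) : Even ((x - m).val) ↔ (Even x.val ↔ m ≤ x.val) := by
  have hx := x.val_lt
  have := Nat.odd_iff.mp hn
  have := Nat.even_iff.mp hme
  by_cases hmx : m ≤ x.val
  · rw [ZMod.val_sub (by rwa [ZMod.val_natCast_of_lt hm]), ZMod.val_natCast_of_lt hm]
    simp only [Nat.even_iff]
    omega
  · have h : x - m = ((x.val + (n - m) : ℕ) : ZMod n) := by
      rw [Nat.cast_add, Nat.cast_sub hm.le, ZMod.natCast_self, ZMod.natCast_zmod_val]
      ring
    rw [h, ZMod.val_natCast_of_lt (by omega)]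
    simp only [Nat.even_iff]
    omega

lemma ZMod.exists_even_eq_natCast_or_eq_neg (hn : Odd n) (x : ZMod n) :
    ∃ m < n, Even m ∧ (x = m ∨ x = -m) := by
  have hx := x.val_lt
  by_cases hxe : Even x.val
  · exact ⟨x.val, hx, hxe, .inl (ZMod.natCast_zmod_val x).symm⟩
  · have := Nat.odd_iff.mp hn
    rw [Nat.not_even_iff] at hxe
    refine ⟨n - x.val, by omega, Nat.even_iff.mpr (by omega), .inr ?_⟩
    rw [Nat.cast_sub hx.le, ZMod.natCast_self, ZMod.natCast_zmod_val]
    ring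

lemma image_add_range_eq_filter (C : ZMod n) {m : ℕ} (hm : m ≤ n) :
    (range m).image (fun j : ℕ => C + (j : ZMod n)) = univ.filter (fun i => (i - C).val < m) := by
  ext i
  simp only [mem_image, mem_range, mem_filter, mem_univ, true_and]
  constructor
  · rintro ⟨j, hj, rfl⟩
    rwa [add_sub_cancel_left, ZMod.val_natCast_of_lt (by omega)]
  · intro hi
    exact ⟨(i - C).val, hi, by rw [ZMod.natCast_zmod_val, add_sub_cancel]⟩

/-- Moving the cut by an even `m < n` flips the colour of exactly the `m` pieces it passes over. -/
lemma redSize_add_eq_sum_ite (hn : Odd n) (s : ZMod n → ℝ) (C : ZMod n) {m : ℕ} (hm : m < n)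
    (hme : Even m) :
    redSize n s (C + m) = ∑ i, if (i - C).val < m
      then (if Even ((i - C).val) then 0 else s i)
      else (if Even ((i - C).val) then s i else 0) := by
  refine sum_congr rfl fun i _ => ?_
  simp only [show i - (C + m) = i - C - m by ring, ZMod.even_val_sub_natCast_iff hn _ hm hme]
  by_cases h : (i - C).val < m <;> by_cases he : Even (i - C).val <;> simp [h, he]

lemma redSize_le_redSize_add_iff (hn : Odd n) (s : ZMod n → ℝ) (C : ZMod n) {m : ℕ}
    (hm : m < n) (hme : Even m) :
    redSize n s C ≤ redSize n s (C + m) ↔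
      redSizeOn n s C ((range m).image (fun j : ℕ => C + (j : ZMod n))) ≤
        greenSizeOn n s C ((range m).image (fun j : ℕ => C + (j : ZMod n))) := by
  rw [image_add_range_eq_filter C hm.le]
  have key : redSize n s (C + m) + redSizeOn n s C (univ.filter fun i => (i - C).val < m) =
      redSize n s C + greenSizeOn n s C (univ.filter fun i => (i - C).val < m) := by
    rw [redSize_add_eq_sum_ite hn s C hm hme, redSizeOn, greenSizeOn, sum_filter, sum_filter,
      redSize, ← sum_add_distrib, ← sum_add_distrib]
    refine sum_congr rfl fun i _ => ?_
    split_ifs <;> ring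
  constructor <;> intro h <;> linarith

lemma redSize_reflect (hn : Odd n) (s : ZMod n → ℝ) (a C : ZMod n) :
    redSize n (fun i => s (a - 1 - i)) (a - C) = redSize n s C := by
  refine Fintype.sum_equiv (Equiv.subLeft (a - 1)) _ _ fun i => ?_
  simp only [Equiv.subLeft_apply, show a - 1 - i - C = -(i - (a - C)) - 1 by ring,
    ZMod.even_val_neg_sub_one_iff hn]

/-- The backward case is the forward one for the pizza reflected in the cut `C`. -/
lemma redSize_le_redSize_sub_iff (hn : Odd n) (s : ZMod n → ℝ) (C : ZMod n) {m : ℕ}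
    (hm : m < n) (hme : Even m) :
    redSize n s C ≤ redSize n s (C - m) ↔
      redSizeOn n s C ((range m).image (fun j : ℕ => C - 1 - (j : ZMod n))) ≤
        greenSizeOn n s C ((range m).image (fun j : ℕ => C - 1 - (j : ZMod n))) := by
  have hC := redSize_reflect hn s (C + C) C
  have hCm := redSize_reflect hn s (C + C) (C - m)
  rw [add_sub_cancel_right] at hC
  rw [show C + C - (C - m) = C + m by ring] at hCm
  have himage : (range m).image (fun j : ℕ => C - 1 - (j : ZMod n)) =
      ((range m).image (fun j : ℕ => C + (j : ZMod n))).image (C + C - 1 - ·) := by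
    rw [image_image]
    exact congrArg (image · _) (funext fun j => by simp only [Function.comp_apply]; ring)
  have hsum (f : ZMod n → ℝ) :
      ∑ i ∈ (range m).image (fun j : ℕ => C - 1 - (j : ZMod n)), f i =
        ∑ i ∈ (range m).image (fun j : ℕ => C + (j : ZMod n)), f (C + C - 1 - i) := by
    rw [himage, sum_image fun _ _ _ _ h => sub_right_injective h]
  have hcolour (i : ZMod n) : Even ((C + C - 1 - i - C).val) ↔ Even ((i - C).val) := by
    rw [show C + C - 1 - i - C = -(i - C) - 1 by ring, ZMod.even_val_neg_sub_one_iff hn]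
  simp only [redSizeOn, greenSizeOn, hsum, hcolour]
  rw [← hC, ← hCm]
  exact redSize_le_redSize_add_iff hn _ C hm hme

end

theorem stmt9_general (n : ℕ) [NeZero n] (hn : Odd n) (s : ZMod n → ℝ)
    (C : ZMod n) :
    (∀ C' : ZMod n, redSize n s C ≤ redSize n s C') ↔
      (∀ m : ℕ, m < n → Even m → ∀ I : Finset (ZMod n),
        (I = (Finset.range m).image (fun j : ℕ => C + (j : ZMod n)) ∨
         I = (Finset.range m).image (fun j : ℕ => C - 1 - (j : ZMod n))) →
        (∑ i ∈ I, if Even ((i - C).val) then s i else 0) ≤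
          ∑ i ∈ I, if Even ((i - C).val) then 0 else s i) := by
  constructor
  · rintro hmin m hm hme I (rfl | rfl)
    · exact (redSize_le_redSize_add_iff hn s C hm hme).1 (hmin _)
    · exact (redSize_le_redSize_sub_iff hn s C hm hme).1 (hmin _)
  · intro h C'
    obtain ⟨m, hm, hme, hC' | hC'⟩ := ZMod.exists_even_eq_natCast_or_eq_neg hn (C' - C)
    · rw [sub_eq_iff_eq_add'.1 hC']
      exact (redSize_le_redSize_add_iff hn s C hm hme).2 (h m hm hme _ (.inl rfl))
    · rw [sub_eq_iff_eq_add'.1 hC', ← sub_eq_add_neg]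
      exact (redSize_le_redSize_sub_iff hn s C hm hme).2 (h m hm hme _ (.inr rfl))

/-- A cut `C` of an odd pizza minimizes `‖R(C)‖` over all cuts if and only if
for every even cyclic interval `I` ending at `C` (on either side), the green
size of `I` is at least its red size. -/
theorem stmt9 (n : ℕ) [NeZero n] (hn : Odd n) (s : ZMod n → ℝ) (hs : ∀ i, 0 ≤ s i)
    (C : ZMod n) :
    (∀ C' : ZMod n, redSize n s C ≤ redSize n s C') ↔
      (∀ m : ℕ, m < n → Even m → ∀ I : Finset (ZMod n),
        (I = (Finset.range m).image (fun j : ℕ => C + (j : ZMod n)) ∨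
         I = (Finset.range m).image (fun j : ℕ => C - 1 - (j : ZMod n))) →
        (∑ i ∈ I, if Even ((i - C).val) then s i else 0) ≤
          ∑ i ∈ I, if Even ((i - C).val) then 0 else s i) :=
  stmt9_general n hn s C
end

section
/- Let b̄, b, m̄, m, w̄, w ≥ 0 and b̄', b', m̄', m', w̄', w' ≥ 0 satisfy b̄ + m ≥ b + m̄, m̄ + w ≥ m + w̄, b̄ + w ≥ b + w̄, together with w = b' + m' + w̄' and w̄ = b̄' + m̄' + w'. Then at least one of the four quantities (b̄ + m + w), (b̄/2 + m + w̄), (b + m̄ + b̄' + m' + w'), (b + m̄ + b' + m̄' + w̄'/2) is at least (4/9)·(b̄ + b + m̄ + m + w̄ + w). -/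
theorem le_or_le_or_le_or_le_of_weighted_le {t a b c d α β γ δ : ℝ}
    (hα : 0 < α) (hβ : 0 < β) (hγ : 0 < γ) (hδ : 0 < δ)
    (h : (α + β + γ + δ) * t ≤ α * a + β * b + γ * c + δ * d) :
    t ≤ a ∨ t ≤ b ∨ t ≤ c ∨ t ≤ d := by
  by_contra! hlt
  obtain ⟨ha, hb, hc, hd⟩ := hlt
  have := mul_lt_mul_of_pos_left ha hα
  have := mul_lt_mul_of_pos_left hb hβ
  have := mul_lt_mul_of_pos_left hc hγ
  have := mul_lt_mul_of_pos_left hd hδ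
  linarith

/-- After substituting `w` and `w̄`, the weighted sum exceeds twice the total by
exactly `(m + b' + m') / 2`. -/
theorem two_mul_total_le_weighted_outcomes (bb b mm m ww w bb' b' mm' m' ww' w' : ℝ)
    (hm : 0 ≤ m) (hb' : 0 ≤ b') (hm' : 0 ≤ m')
    (e1 : w = b' + m' + ww') (e2 : ww = bb' + mm' + w') :
    2 * (bb + b + mm + m + ww + w) ≤
      3 / 2 * (bb + m + w) + (bb / 2 + m + ww) + (b + mm + bb' + m' + w') +
        (b + mm + b' + mm' + ww' / 2) := by
  subst e1 e2
  linarith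

theorem stmt14_general (bb b mm m ww w bb' b' mm' m' ww' w' : ℝ)
    (hm : 0 ≤ m) (hb' : 0 ≤ b') (hm' : 0 ≤ m')
    (e1 : w = b' + m' + ww') (e2 : ww = bb' + mm' + w') :
    (4 / 9) * (bb + b + mm + m + ww + w) ≤ bb + m + w ∨
    (4 / 9) * (bb + b + mm + m + ww + w) ≤ bb / 2 + m + ww ∨
    (4 / 9) * (bb + b + mm + m + ww + w) ≤ b + mm + bb' + m' + w' ∨
    (4 / 9) * (bb + b + mm + m + ww + w) ≤ b + mm + b' + mm' + ww' / 2 := by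
  apply le_or_le_or_le_or_le_of_weighted_le (α := 3 / 2) (by norm_num) one_pos one_pos one_pos
  linarith [two_mul_total_le_weighted_outcomes bb b mm m ww w bb' b' mm' m' ww' w' hm hb' hm' e1 e2]

/-- The averaging step of Case 2 (the W-pizza is hard) of the 4/9-theorem:
with the primed variables the major/minor part sizes of the tripartition of the
W-pizza (so that `w = b' + m' + w̄'` and `w̄ = b̄' + m̄' + w'`), one of the four
guaranteed outcomes is at least 4/9 of the total size.  Here `bb, mm, ww, bb',
mm', ww'` denote the major sizes and `b, m, w, b', m', w'` the minor sizes. -/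
theorem stmt14 (bb b mm m ww w bb' b' mm' m' ww' w' : ℝ)
    (hbb : 0 ≤ bb) (hb : 0 ≤ b) (hmm : 0 ≤ mm) (hm : 0 ≤ m) (hww : 0 ≤ ww) (hw : 0 ≤ w)
    (hbb' : 0 ≤ bb') (hb' : 0 ≤ b') (hmm' : 0 ≤ mm') (hm' : 0 ≤ m')
    (hww' : 0 ≤ ww') (hw' : 0 ≤ w')
    (h1 : b + mm ≤ bb + m) (h2 : m + ww ≤ mm + w) (h3 : b + ww ≤ bb + w)
    (e1 : w = b' + m' + ww') (e2 : ww = bb' + mm' + w') :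
    (4 / 9) * (bb + b + mm + m + ww + w) ≤ bb + m + w ∨
    (4 / 9) * (bb + b + mm + m + ww + w) ≤ bb / 2 + m + ww ∨
    (4 / 9) * (bb + b + mm + m + ww + w) ≤ b + mm + bb' + m' + w' ∨
    (4 / 9) * (bb + b + mm + m + ww + w) ≤ b + mm + b' + mm' + ww' / 2 :=
  stmt14_general bb b mm m ww w bb' b' mm' m' ww' w' hm hb' hm' e1 e2
end
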